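/- arXiv:2007.03917 — 2 statements merged into one kernel-verified Lean document; each statement's English description precedes it below -/
import Mathlib

section
/- Every weight space of a simple weight A_k-module is one-dimensional over ℂ. -/
noncomputable section

namespace BP

/-- The free `ℂ`-algebra on four generators `J, G⁺, G⁻, L`. -/
abbrev F : Type := FreeAlgebra ℂ (Fin 4)

def jF : F := FreeAlgebra.ι ℂ 0
def gpF : F := FreeAlgebra.ι ℂ 1
def gmF : F := FreeAlgebra.ι ℂ 2
def lF : F := FreeAlgebra.ι ℂ 3

/-- `f_k(J, L) = 3J² − (k+3)L − (1/8)(k+1)(2k+3)·1`, as an element of the free algebra. -/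
def fF (k : ℂ) : F :=
  3 * jF ^ 2 - algebraMap ℂ F (k + 3) * lF - algebraMap ℂ F (1/8 * (k + 1) * (2*k + 3))

/-- The defining relations of `A_k`: `L` is central, `[J,G⁺] = G⁺`, `[J,G⁻] = −G⁻`,
`[G⁺,G⁻] = f_k(J,L)`. -/
inductive Rel (k : ℂ) : F → F → Prop
  | lj : Rel k (lF * jF) (jF * lF)
  | lgp : Rel k (lF * gpF) (gpF * lF)
  | lgm : Rel k (lF * gmF) (gmF * lF)
  | jgp : Rel k (jF * gpF - gpF * jF) gpF
  | jgm : Rel k (jF * gmF - gmF * jF) (-gmF)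
  | gpgm : Rel k (gpF * gmF - gmF * gpF) (fF k)

/-- The unital associative `ℂ`-algebra `A_k`: the quotient of the free algebra on
`J, G⁺, G⁻, L` by the two-sided ideal generated by the defining relations. -/
def A (k : ℂ) : Type := RingQuot (Rel k)

instance (k : ℂ) : Ring (A k) := inferInstanceAs (Ring (RingQuot (Rel k)))
instance (k : ℂ) : Algebra ℂ (A k) := inferInstanceAs (Algebra ℂ (RingQuot (Rel k)))

/-- The quotient map `F →ₐ[ℂ] A_k`. -/
def mk (k : ℂ) : F →ₐ[ℂ] A k := RingQuot.mkAlgHom ℂ (Rel k)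

/-- The generator `J` of `A_k`. -/
def J (k : ℂ) : A k := mk k jF
/-- The generator `G⁺` of `A_k`. -/
def Gp (k : ℂ) : A k := mk k gpF
/-- The generator `G⁻` of `A_k`. -/
def Gm (k : ℂ) : A k := mk k gmF
/-- The generator `L` of `A_k`. -/
def L (k : ℂ) : A k := mk k lF

/-- The weight space of weight `(j, Δ)` in an `A_k`-module `M` (with a compatible
`ℂ`-vector space structure): the simultaneous eigenspace of `J` and `L` with
eigenvalues `j` and `Δ`. -/
def weightSpace (k : ℂ) {M : Type} [AddCommGroup M] [Module ℂ M] [Module (A k) M]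
    [IsScalarTower ℂ (A k) M] (j Δ : ℂ) : Submodule ℂ M where
  carrier := {m | J k • m = j • m ∧ L k • m = Δ • m}
  add_mem' := by
    rintro a b ⟨h1, h2⟩ ⟨h3, h4⟩
    constructor <;> simp only [smul_add, h1, h2, h3, h4]
  zero_mem' := by constructor <;> simp
  smul_mem' := by
    rintro c m ⟨h1, h2⟩
    constructor
    · rw [← smul_comm c (J k) m, h1, smul_smul, smul_smul, mul_comm]
    · rw [← smul_comm c (L k) m, h2, smul_smul, smul_smul, mul_comm]

/-- An `A_k`-module (with compatible `ℂ`-structure) is a *weight module* if it has a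
`ℂ`-basis of weight vectors and all its weight spaces are finite-dimensional. -/
def IsWeightModule (k : ℂ) (M : Type) [AddCommGroup M] [Module ℂ M] [Module (A k) M]
    [IsScalarTower ℂ (A k) M] : Prop :=
  (∃ (ι : Type) (b : Module.Basis ι ℂ M), ∀ i : ι, ∃ j Δ : ℂ, b i ∈ weightSpace k j Δ) ∧
  ∀ j Δ : ℂ, FiniteDimensional ℂ ↥(weightSpace k (M := M) j Δ)

/-! The element `Ω = 2 G⁻G⁺ + 2J³ + 3J² + J − 2γJ` with `γ = (k+3)L + (1/8)(k+1)(2k+3)` is central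
in `A_k`: since `J G^± = G^± (J ± 1)`, this reduces to the identity
`casimirCubic γ (t + 1) − casimirCubic γ t = 2 f_k(t + 1)`. Being central, `Ω` preserves the
finite-dimensional weight space `W = W_{j,Δ}`, so it has an eigenvector `w ∈ W`, say `Ω w = c w`,
and then `Ω` acts by `c` on all of `A_k w`. Consequently `G⁻G⁺` and `G⁺G⁻` act by scalars on weight
vectors of `A_k w`, so the vectors `(G⁺)ⁿ w` and `(G⁻)ⁿ w` span an `A_k`-stable subspace, which is
`M` by simplicity. They are `J`-eigenvectors with eigenvalues `j + n` and `j − n`, so the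
eigenvalue-`j` part of their span is `ℂ w`: `W = ℂ w`. -/

section Polynomials

variable {R : Type*} [Ring R]

def commutatorPoly (g t : R) : R := 3 * t ^ 2 - g

def casimirCubic (g t : R) : R := 2 * t ^ 3 + 3 * t ^ 2 + t - 2 * g * t

theorem casimirCubic_add_one (g t : R) :
    casimirCubic g (t + 1) = casimirCubic g t + 2 * commutatorPoly g (t + 1) := by
  unfold casimirCubic commutatorPoly; noncomm_ring

variable {a g s t : R}

theorem _root_.SemiconjBy.commutatorPoly (h : SemiconjBy a s t) (hg : Commute a g) :
    SemiconjBy a (commutatorPoly g s) (commutatorPoly g t) :=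
  (SemiconjBy.mul_right (Commute.ofNat_right a 3) (h.pow_right 2)).sub_right hg

theorem _root_.SemiconjBy.casimirCubic (h : SemiconjBy a s t) (hg : Commute a g) :
    SemiconjBy a (casimirCubic g s) (casimirCubic g t) :=
  (((SemiconjBy.mul_right (Commute.ofNat_right a 2) (h.pow_right 3)).add_right
    (SemiconjBy.mul_right (Commute.ofNat_right a 3) (h.pow_right 2))).add_right h).sub_right
    (SemiconjBy.mul_right (SemiconjBy.mul_right (Commute.ofNat_right a 2) hg) h)

end Polynomials

variable (k : ℂ) in
def gamma {R : Type*} [Ring R] [Algebra ℂ R] (l : R) : R :=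
  (k + 3) • l + algebraMap ℂ R (1/8 * (k + 1) * (2*k + 3))

theorem ofNat_smul_eq_ofNat_smul (R S : Type*) {M : Type*} [Semiring R] [Semiring S]
    [AddCommMonoid M] [Module R M] [Module S M] (n : ℕ) [n.AtLeastTwo] (x : M) :
    (ofNat(n) : R) • x = (ofNat(n) : S) • x :=
  (ofNat_smul_eq_nsmul R n x).trans (ofNat_smul_eq_nsmul S n x).symm

section ScalarActions

variable {R M : Type*} [Ring R] [Algebra ℂ R] [AddCommGroup M] [Module ℂ M] [Module R M]
  [IsScalarTower ℂ R M] {x : M} {a b : R} {u v : ℂ}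

theorem mul_smul_of_smul_eq (ha : a • x = u • x) (hb : b • x = v • x) :
    (a * b) • x = (u * v) • x := by
  rw [mul_smul, hb, smul_comm, ha, smul_smul, mul_comm]

theorem pow_smul_of_smul_eq (ha : a • x = u • x) (n : ℕ) : (a ^ n) • x = (u ^ n) • x := by
  induction n with
  | zero => simp
  | succ n ih => rw [pow_succ, pow_succ, mul_smul_of_smul_eq ih ha]

theorem commutatorPoly_smul_of_smul_eq (ha : a • x = u • x) (hb : b • x = v • x) :
    commutatorPoly b a • x = commutatorPoly v u • x := by
  rw [commutatorPoly, commutatorPoly, sub_smul, sub_smul, hb,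
    mul_smul_of_smul_eq (ofNat_smul_eq_ofNat_smul R ℂ 3 x) (pow_smul_of_smul_eq ha 2)]

theorem casimirCubic_smul_of_smul_eq (ha : a • x = u • x) (hb : b • x = v • x) :
    casimirCubic b a • x = casimirCubic v u • x := by
  rw [casimirCubic, casimirCubic, sub_smul, add_smul, add_smul, sub_smul, add_smul, add_smul,
    mul_smul_of_smul_eq (ofNat_smul_eq_ofNat_smul R ℂ 2 x) (pow_smul_of_smul_eq ha 3),
    mul_smul_of_smul_eq (ofNat_smul_eq_ofNat_smul R ℂ 3 x) (pow_smul_of_smul_eq ha 2),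
    mul_smul_of_smul_eq (mul_smul_of_smul_eq (ofNat_smul_eq_ofNat_smul R ℂ 2 x) hb) ha, ha]

theorem gamma_smul_of_smul_eq (k : ℂ) (hb : b • x = v • x) : gamma k b • x = gamma k v • x := by
  simp only [gamma, add_smul, smul_assoc, hb, algebraMap_smul, smul_eq_mul, mul_smul,
    Algebra.algebraMap_self, RingHom.id_apply]

theorem smul_mem_span_of_forall_smul_mem {ι : Type*} {w : ι → M}
    (h : ∀ i, a • w i ∈ Submodule.span ℂ (Set.range w)) {y : M}
    (hy : y ∈ Submodule.span ℂ (Set.range w)) : a • y ∈ Submodule.span ℂ (Set.range w) :=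
  (Submodule.span_le (p := (Submodule.span ℂ (Set.range w)).comap (Algebra.lsmul ℂ ℂ M a))).2
    (Set.range_subset_iff.2 h) hy

end ScalarActions

theorem _root_.Module.End.mem_span_singleton_of_mem_eigenspace {K V ι : Type*} [Field K]
    [AddCommGroup V] [Module K V] {f : Module.End K V} {v : ι → V} {μ : ι → K} {i₀ : ι}
    (hv : ∀ i, v i ∈ f.eigenspace (μ i)) (hμ : ∀ i, μ i = μ i₀ → i = i₀) {x : V}
    (hx : x ∈ Submodule.span K (Set.range v)) (hx₀ : x ∈ f.eigenspace (μ i₀)) :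
    x ∈ K ∙ v i₀ := by
  have hle : Submodule.span K (Set.range v)
      ≤ (K ∙ v i₀) ⊔ ⨆ (t) (_ : t ≠ μ i₀), f.eigenspace t := by
    refine Submodule.span_le.2 (Set.range_subset_iff.2 fun i => ?_)
    by_cases hi : i = i₀
    · exact hi ▸ Submodule.mem_sup_left (Submodule.mem_span_singleton_self _)
    · exact Submodule.mem_sup_right <| Submodule.mem_iSup_of_mem (μ i) <|
        Submodule.mem_iSup_of_mem (fun h => hi (hμ i h)) (hv i)
  obtain ⟨y, hy, z, hz, rfl⟩ := Submodule.mem_sup.1 (hle hx)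
  have hy₀ : y ∈ f.eigenspace (μ i₀) := (Submodule.span_singleton_le_iff_mem _ _).2 (hv i₀) hy
  have hz₀ : z = 0 := Submodule.disjoint_def.1 (f.eigenspaces_iSupIndep (μ i₀)) z
    (by simpa using Submodule.sub_mem _ hx₀ hy₀) hz
  rwa [hz₀, add_zero]

variable {k : ℂ}

theorem mk_eq_mk_of_rel {x y : F} (h : Rel k x y) : mk k x = mk k y := RingQuot.mkAlgHom_rel ℂ h

theorem mk_surjective : Function.Surjective (mk k) := RingQuot.mkAlgHom_surjective ℂ (Rel k)

theorem commute_L_J : Commute (L k) (J k) :=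
  (map_mul _ _ _).symm.trans ((mk_eq_mk_of_rel Rel.lj).trans (map_mul _ _ _))

theorem commute_L_Gp : Commute (L k) (Gp k) :=
  (map_mul _ _ _).symm.trans ((mk_eq_mk_of_rel Rel.lgp).trans (map_mul _ _ _))

theorem commute_L_Gm : Commute (L k) (Gm k) :=
  (map_mul _ _ _).symm.trans ((mk_eq_mk_of_rel Rel.lgm).trans (map_mul _ _ _))

theorem J_mul_Gp : J k * Gp k = Gp k * (J k + 1) := by
  have h : J k * Gp k - Gp k * J k = Gp k := by
    simpa only [map_mul, map_sub, J, Gp] using mk_eq_mk_of_rel (Rel.jgp (k := k))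
  rw [mul_add, mul_one]; exact sub_eq_iff_eq_add'.1 h

theorem J_mul_Gm : J k * Gm k = Gm k * (J k - 1) := by
  have h : J k * Gm k - Gm k * J k = -Gm k := by
    simpa only [map_mul, map_sub, map_neg, J, Gm] using mk_eq_mk_of_rel (Rel.jgm (k := k))
  rw [mul_sub, mul_one, sub_eq_add_neg]; exact sub_eq_iff_eq_add'.1 h

theorem Gp_mul_Gm : Gp k * Gm k = Gm k * Gp k + commutatorPoly (gamma k (L k)) (J k) := by
  have h : Gp k * Gm k - Gm k * Gp k = mk k (fF k) := by
    simpa only [map_mul, map_sub, Gp, Gm] using mk_eq_mk_of_rel (Rel.gpgm (k := k))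
  rw [← sub_eq_iff_eq_add', h, fF, commutatorPoly, gamma, Algebra.smul_def]
  simp only [map_sub, map_mul, map_pow, map_ofNat, AlgHom.commutes]
  rw [L, J, sub_sub]

theorem A.induction_on {P : A k → Prop} (a : A k) (hJ : P (J k)) (hGp : P (Gp k))
    (hGm : P (Gm k)) (hL : P (L k)) (hscalar : ∀ r : ℂ, P (algebraMap ℂ (A k) r))
    (hadd : ∀ a b, P a → P b → P (a + b)) (hmul : ∀ a b, P a → P b → P (a * b)) : P a := by
  obtain ⟨y, rfl⟩ := mk_surjective a
  induction y using FreeAlgebra.induction with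
  | grade0 r => simpa only [AlgHom.commutes] using hscalar r
  | grade1 i => fin_cases i <;> assumption
  | mul a b ha hb => simpa only [map_mul] using hmul _ _ ha hb
  | add a b ha hb => simpa only [map_add] using hadd _ _ ha hb

theorem commute_L (a : A k) : Commute (L k) a :=
  A.induction_on a commute_L_J commute_L_Gp commute_L_Gm (.refl _)
    (fun _ => Algebra.commute_algebraMap_right _ _) (fun _ _ => .add_right) (fun _ _ => .mul_right)

theorem commute_gamma_L (a : A k) : Commute (gamma k (L k)) a :=
  ((commute_L a).smul_left _).add_left (Algebra.commute_algebraMap_left _ _)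

variable (k) in
def casimir : A k := 2 * (Gm k * Gp k) + casimirCubic (gamma k (L k)) (J k)

theorem commute_casimir_Gp : Commute (casimir k) (Gp k) := by
  have hJ : SemiconjBy (Gp k) (J k + 1) (J k) := J_mul_Gp.symm
  have hcub : casimirCubic (gamma k (L k)) (J k) * Gp k = Gp k * casimirCubic (gamma k (L k)) (J k)
      + 2 * (commutatorPoly (gamma k (L k)) (J k) * Gp k) := by
    rw [← (hJ.casimirCubic (commute_gamma_L _).symm).eq, casimirCubic_add_one,
      ← (hJ.commutatorPoly (commute_gamma_L _).symm).eq]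
    noncomm_ring
  calc casimir k * Gp k = 2 * (Gm k * Gp k) * Gp k + casimirCubic (gamma k (L k)) (J k) * Gp k :=
        add_mul _ _ _
    _ = 2 * (Gm k * Gp k + commutatorPoly (gamma k (L k)) (J k)) * Gp k
        + Gp k * casimirCubic (gamma k (L k)) (J k) := by rw [hcub]; noncomm_ring
    _ = Gp k * casimir k := by rw [← Gp_mul_Gm, casimir]; noncomm_ring

theorem commute_casimir_Gm : Commute (casimir k) (Gm k) := by
  have hJ : SemiconjBy (Gm k) (J k - 1) (J k) := J_mul_Gm.symm
  have hcub : Gm k * casimirCubic (gamma k (L k)) (J k) = casimirCubic (gamma k (L k)) (J k) * Gm k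
      + 2 * (Gm k * commutatorPoly (gamma k (L k)) (J k)) := by
    conv_lhs => rw [← sub_add_cancel (J k) 1, casimirCubic_add_one, sub_add_cancel]
    rw [← (hJ.casimirCubic (commute_gamma_L _).symm).eq]
    noncomm_ring
  calc casimir k * Gm k
        = 2 * (Gm k * (Gp k * Gm k)) + casimirCubic (gamma k (L k)) (J k) * Gm k := by
        rw [casimir]; noncomm_ring
    _ = Gm k * casimir k := by
        rw [casimir, mul_add (Gm k) _ (casimirCubic _ _), hcub, Gp_mul_Gm]
        noncomm_ring

theorem commute_casimir_J : Commute (casimir k) (J k) := by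
  have hGm : SemiconjBy (Gm k) (J k - 1) (J k) := J_mul_Gm.symm
  have hGp : SemiconjBy (Gp k) (J k) (J k - 1) := by
    rw [SemiconjBy, sub_one_mul, J_mul_Gp, mul_add_one, add_sub_cancel_right]
  have hGmGp : Commute (Gm k * Gp k) (J k) := hGm.mul_left hGp
  exact (((Commute.ofNat_left 2 _).mul_left hGmGp).add_left
    ((Commute.refl (J k)).casimirCubic (commute_gamma_L _).symm).symm)

theorem commute_casimir (a : A k) : Commute (casimir k) a :=
  A.induction_on a commute_casimir_J commute_casimir_Gp commute_casimir_Gm (commute_L _).symm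
    (fun _ => Algebra.commute_algebraMap_right _ _) (fun _ _ => .add_right) (fun _ _ => .mul_right)

section Ladder

variable {M : Type} [AddCommGroup M] [Module (A k) M] {w : M}

variable (k) in
def ladder (w : M) : ℤ → M
  | .ofNat n => Gp k ^ n • w
  | .negSucc n => Gm k ^ (n + 1) • w

theorem ladder_zero : ladder k w 0 = w := by
  simp [ladder]

end Ladder

section WeightSpaces

variable {M : Type} [AddCommGroup M] [Module ℂ M] [Module (A k) M] [IsScalarTower ℂ (A k) M]
  {t j Δ c : ℂ} {x w : M}

theorem smul_mem_weightSpace {a : A k} {s : ℂ} (ha : J k * a = a * (J k + algebraMap ℂ (A k) s))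
    (hx : x ∈ weightSpace k j Δ) : a • x ∈ weightSpace k (j + s) Δ := by
  refine ⟨?_, ?_⟩
  · rw [← mul_smul, ha, mul_smul, add_smul, hx.1, algebraMap_smul, ← add_smul, smul_comm]
  · rw [← mul_smul, (commute_L a).eq, mul_smul, hx.2, smul_comm]

theorem Gp_smul_mem_weightSpace (hx : x ∈ weightSpace k j Δ) :
    Gp k • x ∈ weightSpace k (j + 1) Δ :=
  smul_mem_weightSpace (by rw [map_one]; exact J_mul_Gp) hx

theorem Gm_smul_mem_weightSpace (hx : x ∈ weightSpace k j Δ) :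
    Gm k • x ∈ weightSpace k (j - 1) Δ := by
  rw [sub_eq_add_neg]
  exact smul_mem_weightSpace (by rw [map_neg, map_one, ← sub_eq_add_neg]; exact J_mul_Gm) hx

theorem casimir_smul_mem_weightSpace (hx : x ∈ weightSpace k j Δ) :
    casimir k • x ∈ weightSpace k j Δ := by
  simpa using smul_mem_weightSpace (s := 0)
    (by rw [map_zero, add_zero]; exact commute_casimir_J.eq.symm) hx

theorem Gm_smul_Gp_smul (hx : x ∈ weightSpace k t Δ) (hc : casimir k • x = c • x) :
    Gm k • Gp k • x = ((c - casimirCubic (gamma k Δ) t) / 2) • x := by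
  rw [casimir, add_smul, mul_smul (2 : A k), ofNat_smul_eq_ofNat_smul (A k) ℂ 2,
    casimirCubic_smul_of_smul_eq hx.1 (gamma_smul_of_smul_eq k hx.2), mul_smul] at hc
  generalize Gm k • Gp k • x = y at hc ⊢
  linear_combination (norm := module) (1 / 2 : ℂ) • hc

theorem Gp_smul_Gm_smul (hx : x ∈ weightSpace k t Δ) (hc : casimir k • x = c • x) :
    Gp k • Gm k • x = ((c - casimirCubic (gamma k Δ) (t - 1)) / 2) • x := by
  have hcub := casimirCubic_add_one (gamma k Δ) (t - 1)
  rw [sub_add_cancel] at hcub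
  rw [← mul_smul, Gp_mul_Gm, add_smul, mul_smul, Gm_smul_Gp_smul hx hc,
    commutatorPoly_smul_of_smul_eq hx.1 (gamma_smul_of_smul_eq k hx.2), ← add_smul, hcub]
  congr 1
  ring

theorem casimir_smul_smul (hc : casimir k • w = c • w) (a : A k) :
    casimir k • a • w = c • a • w := by
  rw [← mul_smul, (commute_casimir a).eq, mul_smul, hc, smul_comm]

theorem Gp_pow_smul_mem_weightSpace (hx : x ∈ weightSpace k j Δ) (n : ℕ) :
    Gp k ^ n • x ∈ weightSpace k (j + n) Δ := by
  induction n with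
  | zero => simpa using hx
  | succ n ih =>
    rw [pow_succ', mul_smul, Nat.cast_succ, ← add_assoc]
    exact Gp_smul_mem_weightSpace ih

theorem Gm_pow_smul_mem_weightSpace (hx : x ∈ weightSpace k j Δ) (n : ℕ) :
    Gm k ^ n • x ∈ weightSpace k (j - n) Δ := by
  induction n with
  | zero => simpa using hx
  | succ n ih =>
    rw [pow_succ', mul_smul, Nat.cast_succ, ← sub_sub]
    exact Gm_smul_mem_weightSpace ih

theorem ladder_mem_weightSpace (hw : w ∈ weightSpace k j Δ) :
    ∀ n : ℤ, ladder k w n ∈ weightSpace k (j + n) Δ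
  | .ofNat n => by
    rw [Int.ofNat_eq_natCast, Int.cast_natCast]
    exact Gp_pow_smul_mem_weightSpace hw n
  | .negSucc n => by
    rw [Int.cast_negSucc, ← sub_eq_add_neg]
    exact Gm_pow_smul_mem_weightSpace hw (n + 1)

theorem Gp_smul_ladder_mem (hw : w ∈ weightSpace k j Δ) (hc : casimir k • w = c • w) :
    ∀ n : ℤ, Gp k • ladder k w n ∈ ℂ ∙ ladder k w (n + 1)
  | .ofNat n => by
    show Gp k • Gp k ^ n • w ∈ ℂ ∙ (Gp k ^ (n + 1) • w)
    rw [← mul_smul, ← pow_succ']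
    exact Submodule.mem_span_singleton_self _
  | .negSucc 0 => by
    show Gp k • Gm k ^ 1 • w ∈ ℂ ∙ (Gp k ^ 0 • w)
    rw [pow_one, pow_zero, one_smul, Gp_smul_Gm_smul hw hc]
    exact Submodule.smul_mem _ _ (Submodule.mem_span_singleton_self _)
  | .negSucc (n + 1) => by
    show Gp k • Gm k ^ (n + 1 + 1) • w ∈ ℂ ∙ (Gm k ^ (n + 1) • w)
    rw [pow_succ' (Gm k) (n + 1), mul_smul,
      Gp_smul_Gm_smul (Gm_pow_smul_mem_weightSpace hw (n + 1)) (casimir_smul_smul hc _)]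
    exact Submodule.smul_mem _ _ (Submodule.mem_span_singleton_self _)

theorem Gm_smul_ladder_mem (hw : w ∈ weightSpace k j Δ) (hc : casimir k • w = c • w) :
    ∀ n : ℤ, Gm k • ladder k w n ∈ ℂ ∙ ladder k w (n - 1)
  | .ofNat 0 => by
    show Gm k • Gp k ^ 0 • w ∈ ℂ ∙ (Gm k ^ 1 • w)
    rw [pow_zero, one_smul, pow_one]
    exact Submodule.mem_span_singleton_self _
  | .ofNat (n + 1) => by
    rw [show Int.ofNat (n + 1) - 1 = n by simp]
    show Gm k • Gp k ^ (n + 1) • w ∈ ℂ ∙ (Gp k ^ n • w)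
    rw [pow_succ', mul_smul,
      Gm_smul_Gp_smul (Gp_pow_smul_mem_weightSpace hw n) (casimir_smul_smul hc _)]
    exact Submodule.smul_mem _ _ (Submodule.mem_span_singleton_self _)
  | .negSucc n => by
    show Gm k • Gm k ^ (n + 1) • w ∈ ℂ ∙ (Gm k ^ (n + 2) • w)
    rw [← mul_smul, ← pow_succ']
    exact Submodule.mem_span_singleton_self _

theorem smul_mem_span_ladder (hw : w ∈ weightSpace k j Δ) (hc : casimir k • w = c • w)
    (a : A k) : ∀ y ∈ Submodule.span ℂ (Set.range (ladder k w)),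
      a • y ∈ Submodule.span ℂ (Set.range (ladder k w)) := by
  have of_singleton : ∀ (g : A k) (m : ℤ → ℤ), (∀ n, g • ladder k w n ∈ ℂ ∙ ladder k w (m n)) →
      ∀ y ∈ Submodule.span ℂ (Set.range (ladder k w)),
        g • y ∈ Submodule.span ℂ (Set.range (ladder k w)) := fun g m h _ =>
    smul_mem_span_of_forall_smul_mem fun n =>
      Submodule.span_mono (Set.singleton_subset_iff.2 (Set.mem_range_self (m n))) (h n)
  induction a using A.induction_on with
  | hJ =>
    refine of_singleton _ id fun n => ?_
    rw [(ladder_mem_weightSpace hw n).1]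
    exact Submodule.smul_mem _ _ (Submodule.mem_span_singleton_self _)
  | hGp => exact of_singleton _ _ (Gp_smul_ladder_mem hw hc)
  | hGm => exact of_singleton _ _ (Gm_smul_ladder_mem hw hc)
  | hL =>
    refine of_singleton _ id fun n => ?_
    rw [(ladder_mem_weightSpace hw n).2]
    exact Submodule.smul_mem _ _ (Submodule.mem_span_singleton_self _)
  | hscalar r =>
    intro y hy
    rw [algebraMap_smul]
    exact Submodule.smul_mem _ _ hy
  | hadd a b ha hb =>
    intro y hy
    rw [add_smul]
    exact Submodule.add_mem _ (ha y hy) (hb y hy)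
  | hmul a b ha hb =>
    intro y hy
    rw [mul_smul]
    exact ha _ (hb y hy)

theorem mem_span_ladder [IsSimpleModule (A k) M] (hw : w ∈ weightSpace k j Δ)
    (hc : casimir k • w = c • w) (hw₀ : w ≠ 0) (x : M) :
    x ∈ Submodule.span ℂ (Set.range (ladder k w)) := by
  obtain ⟨a, rfl⟩ := Submodule.mem_span_singleton.1
    ((IsSimpleModule.span_singleton_eq_top (A k) hw₀).symm ▸ Submodule.mem_top : x ∈ _)
  exact smul_mem_span_ladder hw hc a w (Submodule.subset_span ⟨0, ladder_zero⟩)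

theorem weightSpace_eq_span_singleton [IsSimpleModule (A k) M] (hw : w ∈ weightSpace k j Δ)
    (hc : casimir k • w = c • w) (hw₀ : w ≠ 0) : weightSpace k j Δ = ℂ ∙ w := by
  refine le_antisymm (fun x hx => ?_) ((Submodule.span_singleton_le_iff_mem _ _).2 hw)
  have hJ : ∀ {y : M} {t : ℂ}, y ∈ weightSpace k t Δ →
      y ∈ (Algebra.lsmul ℂ ℂ M (J k)).eigenspace t := fun hy =>
    Module.End.mem_eigenspace_iff.2 hy.1
  simpa [ladder_zero] using Module.End.mem_span_singleton_of_mem_eigenspace (i₀ := 0)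
    (fun n => hJ (ladder_mem_weightSpace hw n)) (fun n h => by simpa using h)
    (mem_span_ladder hw hc hw₀ x) (by simpa using hJ hx)

theorem exists_casimir_eigenvector [FiniteDimensional ℂ (weightSpace k (M := M) j Δ)]
    (hne : weightSpace k (M := M) j Δ ≠ ⊥) :
    ∃ w : M, w ∈ weightSpace k j Δ ∧ w ≠ 0 ∧ ∃ c : ℂ, casimir k • w = c • w := by
  have : Nontrivial (weightSpace k (M := M) j Δ) := Submodule.nontrivial_iff_ne_bot.2 hne
  obtain ⟨c, hc⟩ := Module.End.exists_eigenvalue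
    ((Algebra.lsmul ℂ ℂ M (casimir k)).restrict
      fun _ (hx : _ ∈ weightSpace k j Δ) => casimir_smul_mem_weightSpace hx)
  obtain ⟨⟨w, hw⟩, hmem, hw₀⟩ := hc.exists_hasEigenvector
  exact ⟨w, hw, fun h => hw₀ (Subtype.ext h), c,
    congrArg Subtype.val (Module.End.mem_eigenspace_iff.1 hmem)⟩

end WeightSpaces

/-- every weight space of a simple weight `A_k`-module is
one-dimensional over `ℂ`. -/
theorem weightSpace_dim_one (k : ℂ) (M : Type) [AddCommGroup M] [Module ℂ M]
    [Module (A k) M] [IsScalarTower ℂ (A k) M]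
    (hsimple : IsSimpleModule (A k) M) (hweight : IsWeightModule k M)
    (j Δ : ℂ) (hne : weightSpace k (M := M) j Δ ≠ ⊥) :
    Module.finrank ℂ ↥(weightSpace k (M := M) j Δ) = 1 := by
  have := hweight.2 j Δ
  obtain ⟨w, hw, hw₀, c, hc⟩ := exists_casimir_eigenvector hne
  rw [weightSpace_eq_span_singleton hw hc hw₀, finrank_span_singleton hw₀]

end BP
end
end

section
/- Let u ≥ 3 and v ≥ 2 be coprime integers and k = −3 + u/v. For λ ∈ S_{u,v} with λ^F_1 = 0, define μ by μ^I = (λ^I_2, λ^I_1, λ^I_0) and μ^F = (λ^F_2 + 1, 0, λ^F_0 − 1). Then μ ∈ S_{u,v} with μ^F_1 = 0, and moreover j^tw(μ) = λ^I_1 − j^tw(λ) and Δ^tw(μ) = Δ^tw(λ). -/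
namespace BPW

/-- A triple of natural numbers `(a₀, a₁, a₂)` (the Dynkin labels of a dominant
integral `sl₃` weight). -/
abbrev Triple : Type := ℕ × ℕ × ℕ

/-- A weight `λ = (λ^I, λ^F)` consisting of an integral part and a fractional part. -/
abbrev Wt : Type := Triple × Triple

/-- The sum `a₀ + a₁ + a₂` of the entries of a triple. -/
def sumT (a : Triple) : ℕ := a.1 + a.2.1 + a.2.2

/-- `λ = (λ^I, λ^F)` is a *surviving weight* if `λ^I ∈ P^{u−3}`, `λ^F ∈ P^{v−1}`
and `λ^F₀ ≥ 1`. -/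
def Surviving (u v : ℕ) (w : Wt) : Prop :=
  sumT w.1 = u - 3 ∧ sumT w.2 = v - 1 ∧ 1 ≤ w.2.1

/-- `λ ∈ Γ_{u,v}` iff `λ` is surviving and `λ^F₁ ≥ 1`. -/
def InGamma (u v : ℕ) (w : Wt) : Prop :=
  Surviving u v w ∧ 1 ≤ w.2.2.1

/-- The level `k = −3 + u/v`. -/
def kQ (u v : ℕ) : ℚ := -3 + (u : ℚ) / (v : ℚ)

/-- The Dynkin label `λ₁ = λ^I₁ − (u/v)·λ^F₁`. -/
def dyn1 (u v : ℕ) (w : Wt) : ℚ := (w.1.2.1 : ℚ) - (u : ℚ) / (v : ℚ) * (w.2.2.1 : ℚ)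

/-- The Dynkin label `λ₂ = λ^I₂ − (u/v)·λ^F₂`. -/
def dyn2 (u v : ℕ) (w : Wt) : ℚ := (w.1.2.2 : ℚ) - (u : ℚ) / (v : ℚ) * (w.2.2.2 : ℚ)

/-- The charge `j(λ) = (λ₁ − λ₂)/3`. -/
def jwt (u v : ℕ) (w : Wt) : ℚ := (dyn1 u v w - dyn2 u v w) / 3

/-- The conformal weight
`Δ(λ) = [(λ₁−λ₂)² − 3(λ₁+λ₂)(2(k+1)−λ₁−λ₂)]/(12(k+3))`. -/
def Dwt (u v : ℕ) (w : Wt) : ℚ :=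
  ((dyn1 u v w - dyn2 u v w) ^ 2
      - 3 * (dyn1 u v w + dyn2 u v w) * (2 * (kQ u v + 1) - dyn1 u v w - dyn2 u v w))
    / (12 * (kQ u v + 3))

/-- The twisted charge `j^tw(λ) = (λ₁ − λ₂)/3 + (2k+3)/6`. -/
def jtw (u v : ℕ) (w : Wt) : ℚ := jwt u v w + (2 * kQ u v + 3) / 6

/-- The twisted conformal weight `Δ^tw(λ) = Δ(λ) + (λ₁ − λ₂)/6 + (2k+3)/24`. -/
def Dtw (u v : ℕ) (w : Wt) : ℚ :=
  Dwt u v w + (dyn1 u v w - dyn2 u v w) / 6 + (2 * kQ u v + 3) / 24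

/-- `ω(λ) = −(2/27)(λ₁−λ₂+k+3)(2λ₁+λ₂−k)(λ₁+2λ₂−2k−3)`. -/
def omg (u v : ℕ) (w : Wt) : ℚ :=
  -(2/27) * (dyn1 u v w - dyn2 u v w + kQ u v + 3)
    * (2 * dyn1 u v w + dyn2 u v w - kQ u v)
    * (dyn1 u v w + 2 * dyn2 u v w - 2 * kQ u v - 3)

/-- The map `λ ↦ μ` with `μ^I = (λ^I₂, λ^I₁, λ^I₀)` and `μ^F = (λ^F₂ + 1, 0, λ^F₀ − 1)`. -/
def mu18 (w : Wt) : Wt :=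
  ((w.1.2.2, w.1.2.1, w.1.1), (w.2.2.2 + 1, 0, w.2.1 - 1))

/-! Since `λ^I` and `λ^F` have levels `u − 3` and `v − 1` and `k + 3 = u/v`, the map
`λ ↦ μ` acts on Dynkin labels as `(λ₁, λ₂) ↦ (λ₁, 2k + 3 − λ₁ − λ₂)`; both identities are
polynomial consequences of this, the one for `Δ^tw` needing only `k + 3 ≠ 0`. -/

section

variable {u v : ℕ} {w : Wt}

theorem kQ_add_three (u v : ℕ) : kQ u v + 3 = (u : ℚ) / v := by
  unfold kQ; ring

theorem dyn1_of_fractional_one_eq_zero (u v : ℕ) (hF1 : w.2.2.1 = 0) :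
    dyn1 u v w = w.1.2.1 := by
  simp [dyn1, hF1]

namespace Surviving

theorem cast_sumT_fst (hu : 3 ≤ u) (hw : Surviving u v w) :
    (w.1.1 : ℚ) + w.1.2.1 + w.1.2.2 + 3 = u := by
  have h := hw.1
  unfold sumT at h
  exact_mod_cast (by omega : w.1.1 + w.1.2.1 + w.1.2.2 + 3 = u)

theorem cast_sumT_snd (hw : Surviving u v w) :
    (w.2.1 : ℚ) + w.2.2.1 + w.2.2.2 + 1 = v := by
  obtain ⟨-, h, h0⟩ := hw
  unfold sumT at h
  exact_mod_cast (by omega : w.2.1 + w.2.2.1 + w.2.2.2 + 1 = v)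

theorem mu18 (hw : Surviving u v w) (hF1 : w.2.2.1 = 0) : Surviving u v (mu18 w) := by
  obtain ⟨hI, hF, h0⟩ := hw
  unfold sumT at hI hF
  refine ⟨?_, ?_, ?_⟩ <;> simp only [sumT, BPW.mu18] <;> omega

end Surviving

theorem dyn1_mu18 (u v : ℕ) (hF1 : w.2.2.1 = 0) : dyn1 u v (mu18 w) = dyn1 u v w := by
  simp [dyn1, mu18, hF1]

theorem dyn2_mu18 (hu : 3 ≤ u) (hw : Surviving u v w) :
    dyn2 u v (mu18 w) = 2 * kQ u v + 3 - dyn1 u v w - dyn2 u v w := by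
  have hI := hw.cast_sumT_fst hu
  have hF := hw.cast_sumT_snd
  have ha : ((w.2.1 - 1 : ℕ) : ℚ) = w.2.1 - 1 := by rw [Nat.cast_sub hw.2.2, Nat.cast_one]
  simp only [dyn2, dyn1, kQ, mu18, ha]
  rw [← hI, ← hF]
  field_simp
  ring

theorem jtw_eq_of_dyn {w' : Wt} (h1 : dyn1 u v w' = dyn1 u v w)
    (h2 : dyn2 u v w' = 2 * kQ u v + 3 - dyn1 u v w - dyn2 u v w) :
    jtw u v w' = dyn1 u v w - jtw u v w := by
  simp only [jtw, jwt, h1, h2]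
  ring

theorem Dtw_eq_of_dyn {w' : Wt} (hk : kQ u v + 3 ≠ 0) (h1 : dyn1 u v w' = dyn1 u v w)
    (h2 : dyn2 u v w' = 2 * kQ u v + 3 - dyn1 u v w - dyn2 u v w) :
    Dtw u v w' = Dtw u v w := by
  simp only [Dtw, Dwt, h1, h2]
  field_simp
  ring

end

theorem mu18_conjugate_hw_general (u v : ℕ) (hu : 3 ≤ u)
    (w : Wt) (hw : Surviving u v w) (hF1 : w.2.2.1 = 0) :
    Surviving u v (mu18 w) ∧ (mu18 w).2.2.1 = 0 ∧
    jtw u v (mu18 w) = (w.1.2.1 : ℚ) - jtw u v w ∧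
    Dtw u v (mu18 w) = Dtw u v w := by
  have h1 := dyn1_mu18 u v hF1
  have h2 := dyn2_mu18 hu hw
  have hk : kQ u v + 3 ≠ 0 := by
    rw [kQ_add_three, ← hw.cast_sumT_snd]
    exact div_ne_zero (by exact_mod_cast (by omega : u ≠ 0)) (by positivity)
  refine ⟨hw.mu18 hF1, rfl, ?_, Dtw_eq_of_dyn hk h1 h2⟩
  rw [jtw_eq_of_dyn h1 h2, dyn1_of_fractional_one_eq_zero u v hF1]

/-- for `λ ∈ S_{u,v}` with `λ^F₁ = 0`, the weight `μ` with
`μ^I = (λ^I₂, λ^I₁, λ^I₀)` and `μ^F = (λ^F₂+1, 0, λ^F₀−1)` lies in `S_{u,v}` with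
`μ^F₁ = 0`, and `j^tw(μ) = λ^I₁ − j^tw(λ)`, `Δ^tw(μ) = Δ^tw(λ)`. -/
theorem mu18_conjugate_hw (u v : ℕ) (hu : 3 ≤ u) (hv : 2 ≤ v) (hcop : Nat.Coprime u v)
    (w : Wt) (hw : Surviving u v w) (hF1 : w.2.2.1 = 0) :
    Surviving u v (mu18 w) ∧ (mu18 w).2.2.1 = 0 ∧
    jtw u v (mu18 w) = (w.1.2.1 : ℚ) - jtw u v w ∧
    Dtw u v (mu18 w) = Dtw u v w :=
  mu18_conjugate_hw_general u v hu w hw hF1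

end BPW
end
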